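/- Soundness of NSMB+: if a nested-sequent of MB+ is provable in NSMB+, then it is valid. -/

import Mathlib

set_option maxHeartbeats 1000000

namespace MBQL

/-- The fixed finite set `J ⊆ [0,1]` of inner-product values, with `0, 1 ∈ J`. -/
structure MBParams where
  J : Set ℝ
  finite : J.Finite
  subI : J ⊆ Set.Icc (0:ℝ) 1
  zero_mem : (0:ℝ) ∈ J
  one_mem : (1:ℝ) ∈ J

/-- Formulas of **MB+**: generated from variables, `⊤`, `⊥` by `¬`, `∧` and
the modalities `□^=_α` (`α ∈ J`, `0 < α ≤ 1`), `□^o_α` (`α ∈ J`) and `□^c_0`. -/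
inductive MBPForm (Pm : MBParams) : Type
  | var : ℕ → MBPForm Pm
  | top : MBPForm Pm
  | bot : MBPForm Pm
  | neg : MBPForm Pm → MBPForm Pm
  | conj : MBPForm Pm → MBPForm Pm → MBPForm Pm
  | boxe : (α : ℝ) → α ∈ Pm.J → 0 < α → MBPForm Pm → MBPForm Pm
  | boxo : (α : ℝ) → α ∈ Pm.J → MBPForm Pm → MBPForm Pm
  | boxc0 : MBPForm Pm → MBPForm Pm

noncomputable instance {Pm : MBParams} : DecidableEq (MBPForm Pm) := Classical.decEq _

/-- Valuation of an MB+-formula, given worlds `S`, a relation `R` and a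
valuation `V` of the propositional variables. -/
def MBPForm.valR {Pm : MBParams} {S : Type} (R : S → S → ℝ) (V : ℕ → Set S) :
    MBPForm Pm → Set S
  | .var n => V n
  | .top => Set.univ
  | .bot => ∅
  | .neg A => (A.valR R V)ᶜ
  | .conj A B => A.valR R V ∩ B.valR R V
  | .boxe α _ _ A => {s | ∀ u, R s u = α → u ∈ A.valR R V}
  | .boxo α _ A => {s | ∀ u, α < R s u → u ∈ A.valR R V}
  | .boxc0 A => {s | ∀ u, u ∈ A.valR R V}

/-- An EQL-frame. -/
structure EQLFrame where
  S : Type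
  nonempty : Nonempty S
  R : S → S → ℝ
  mem_Icc : ∀ s t, R s t ∈ Set.Icc (0:ℝ) 1
  eq_one_iff : ∀ s t, (R s t = 1 ↔ s = t)
  symm : ∀ s t, R s t = R t s

/-- An MB-realization for the language of MB+. -/
structure MBPRealization (Pm : MBParams) where
  F : EQLFrame
  P : Set (Set F.S)
  univ_mem : Set.univ ∈ P
  empty_mem : ∅ ∈ P
  inter_mem : ∀ X ∈ P, ∀ Y ∈ P, X ∩ Y ∈ P
  compl_mem : ∀ X ∈ P, Xᶜ ∈ P
  boxe_mem : ∀ α ∈ Pm.J, 0 < α → ∀ X ∈ P, {s | ∀ u, F.R s u = α → u ∈ X} ∈ P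
  boxo_mem : ∀ α ∈ Pm.J, ∀ X ∈ P, {s | ∀ u, α < F.R s u → u ∈ X} ∈ P
  boxc0_mem : ∀ X ∈ P, {s | ∀ u, u ∈ X} ∈ P
  V : ℕ → Set F.S
  V_mem : ∀ n, V n ∈ P

/-- The extended valuation in an MB+-realization. -/
def MBPRealization.val {Pm : MBParams} (M : MBPRealization Pm) (A : MBPForm Pm) :
    Set M.F.S := A.valR M.F.R M.V

/-- Validity of an MB+-formula. -/
def MBPValid {Pm : MBParams} (A : MBPForm Pm) : Prop :=
  ∀ (M : MBPRealization Pm) (s : M.F.S), s ∈ M.val A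

/-- Bracket labels for nested-sequents of MB+: `[·]^=_α` (`0 < α ≤ 1`),
`[·]^o_α` (`α ≠ 1`) and `[·]^c_0`. -/
inductive PLab (Pm : MBParams) : Type
  | eq : (α : ℝ) → α ∈ Pm.J → 0 < α → PLab Pm
  | o : (α : ℝ) → α ∈ Pm.J → α ≠ 1 → PLab Pm
  | c0 : PLab Pm

mutual
/-- Nested-sequents of MB+. -/
inductive PNSeq (Pm : MBParams) : Type
  | node : Finset (MBPForm Pm) → Finset (MBPForm Pm) → PNSeqs Pm → PNSeq Pm
/-- A finite list of labelled child nested-sequents of MB+. -/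
inductive PNSeqs (Pm : MBParams) : Type
  | nil : PNSeqs Pm
  | cons : PLab Pm → PNSeq Pm → PNSeqs Pm → PNSeqs Pm
end

/-- The `i`-th labelled child. -/
def PNSeqs.get {Pm : MBParams} : PNSeqs Pm → ℕ → Option (PLab Pm × PNSeq Pm)
  | .nil, _ => none
  | .cons l t _, 0 => some (l, t)
  | .cons _ _ ts, n+1 => ts.get n

/-- `PSubAt t p u`: the subtree of `t` at the node address `p` is `u`. -/
inductive PSubAt {Pm : MBParams} : PNSeq Pm → List ℕ → PNSeq Pm → Prop
  | here (t : PNSeq Pm) : PSubAt t [] t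
  | there {Γ Δ : Finset (MBPForm Pm)} {ts : PNSeqs Pm} {i : ℕ} {l : PLab Pm}
      {u v : PNSeq Pm} {p : List ℕ} :
      PNSeqs.get ts i = some (l, u) → PSubAt u p v → PSubAt (.node Γ Δ ts) (i :: p) v

mutual
/-- Replace the sequent at the node with address `p` by `Γ' ⇒ Δ'`. -/
def PNSeq.setSeq {Pm : MBParams} :
    PNSeq Pm → List ℕ → Finset (MBPForm Pm) → Finset (MBPForm Pm) → PNSeq Pm
  | .node _ _ ts, [], Γ', Δ' => .node Γ' Δ' ts
  | .node Γ Δ ts, i :: p, Γ', Δ' => .node Γ Δ (PNSeqs.setSeqs ts i p Γ' Δ')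
def PNSeqs.setSeqs {Pm : MBParams} :
    PNSeqs Pm → ℕ → List ℕ → Finset (MBPForm Pm) → Finset (MBPForm Pm) → PNSeqs Pm
  | .nil, _, _, _, _ => .nil
  | .cons l t ts, 0, p, Γ', Δ' => .cons l (t.setSeq p Γ' Δ') ts
  | .cons l t ts, n+1, p, Γ', Δ' => .cons l t (PNSeqs.setSeqs ts n p Γ' Δ')
end

/-- Append a labelled child at the end of a children list. -/
def PNSeqs.snoc {Pm : MBParams} : PNSeqs Pm → PLab Pm → PNSeq Pm → PNSeqs Pm
  | .nil, l, u => .cons l u .nil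
  | .cons l' t ts, l, u => .cons l' t (ts.snoc l u)

mutual
/-- Add a new child `[u]_l` at the node with address `p`. -/
def PNSeq.addChild {Pm : MBParams} : PNSeq Pm → List ℕ → PLab Pm → PNSeq Pm → PNSeq Pm
  | .node Γ Δ ts, [], l, u => .node Γ Δ (ts.snoc l u)
  | .node Γ Δ ts, i :: p, l, u => .node Γ Δ (PNSeqs.addChilds ts i p l u)
def PNSeqs.addChilds {Pm : MBParams} :
    PNSeqs Pm → ℕ → List ℕ → PLab Pm → PNSeq Pm → PNSeqs Pm
  | .nil, _, _, _, _ => .nil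
  | .cons l' t ts, 0, p, l, u => .cons l' (t.addChild p l u) ts
  | .cons l' t ts, n+1, p, l, u => .cons l' t (PNSeqs.addChilds ts n p l u)
end

/-- `A ∨ B`. -/
def MBPForm.or {Pm : MBParams} (A B : MBPForm Pm) : MBPForm Pm :=
  .neg (.conj (.neg A) (.neg B))

/-- `A → B := ¬A ∨ B`. -/
def MBPForm.imp {Pm : MBParams} (A B : MBPForm Pm) : MBPForm Pm := (MBPForm.neg A).or B

/-- Conjunction of a list of formulas. -/
def pconjList {Pm : MBParams} : List (MBPForm Pm) → MBPForm Pm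
  | [] => .top
  | [A] => A
  | A :: B :: rest => .conj A (pconjList (B :: rest))

/-- Disjunction of a list of formulas. -/
def pdisjList {Pm : MBParams} : List (MBPForm Pm) → MBPForm Pm
  | [] => .bot
  | [A] => A
  | A :: B :: rest => (A).or (pdisjList (B :: rest))

/-- `⋀Γ → ⋁Δ`. -/
noncomputable def pseqForm {Pm : MBParams} (Γ Δ : Finset (MBPForm Pm)) : MBPForm Pm :=
  (pconjList Γ.toList).imp (pdisjList Δ.toList)

/-- The box corresponding to a bracket label of MB+. -/
def PLab.box {Pm : MBParams} : PLab Pm → MBPForm Pm → MBPForm Pm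
  | .eq α h h0, A => .boxe α h h0 A
  | .o α h _, A => .boxo α h A
  | .c0, A => .boxc0 A

mutual
/-- The interpretation `τ` of an MB+ nested-sequent as an MB+-formula. -/
noncomputable def PNSeq.tau {Pm : MBParams} : PNSeq Pm → MBPForm Pm
  | .node Γ Δ ts => PNSeqs.tauAux (pseqForm Γ Δ) ts
noncomputable def PNSeqs.tauAux {Pm : MBParams} : MBPForm Pm → PNSeqs Pm → MBPForm Pm
  | A, .nil => A
  | A, .cons l t ts => PNSeqs.tauAux (A.or (l.box t.tau)) ts
end

/-- The condition imposed on `R(E(n₁), E(n₂))` by a bracket label of MB+. -/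
def PLabCond {Pm : MBParams} (l : PLab Pm) (r : ℝ) : Prop :=
  match l with
  | .eq α _ _ => r = α
  | .o α _ _ => α < r
  | .c0 => True

/-- `E` is an embedding of the MB+ nested-sequent `t` into `M`. -/
def PIsEmb {Pm : MBParams} (M : MBPRealization Pm) (t : PNSeq Pm)
    (E : List ℕ → M.F.S) : Prop :=
  ∀ p Γ Δ ts i l u, PSubAt t p (.node Γ Δ ts) → PNSeqs.get ts i = some (l, u) →
    PLabCond l (M.F.R (E p) (E (p ++ [i])))

/-- The MB+ nested-sequent `t` is false in `M` under `E`. -/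
def PFalseUnder {Pm : MBParams} (M : MBPRealization Pm) (t : PNSeq Pm)
    (E : List ℕ → M.F.S) : Prop :=
  ∀ p Γ Δ ts, PSubAt t p (.node Γ Δ ts) →
    (∀ A ∈ Γ, E p ∈ M.val A) ∧ (∀ A ∈ Δ, E p ∉ M.val A)

/-- Validity of an MB+ nested-sequent. -/
def PNSValid {Pm : MBParams} (t : PNSeq Pm) : Prop :=
  ∀ (M : MBPRealization Pm) (E : List ℕ → M.F.S), PIsEmb M t E → ¬ PFalseUnder M t E

/-- Descriptors of the left-rule boxes `□^=_α`, `□^o_α` of MB+. -/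
inductive PBox (Pm : MBParams) : Type
  | e : (α : ℝ) → α ∈ Pm.J → 0 < α → PBox Pm
  | o : (α : ℝ) → α ∈ Pm.J → PBox Pm

/-- The box formula corresponding to a box descriptor. -/
def PBox.box {Pm : MBParams} : PBox Pm → MBPForm Pm → MBPForm Pm
  | .e α h h0, A => .boxe α h h0 A
  | .o α h, A => .boxo α h A

/-- Side condition of the rules (□L), (□L sym) of NSMB+:
`(d = d' = "=" and α = β)`, or `(d = d' = o and α < β)`, or
`(d = o, d' = "=" and α < β)`. -/
def PC1 {Pm : MBParams} : PBox Pm → PLab Pm → Prop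
  | .e α _ _, .eq β _ _ => α = β
  | .o α _, .o β _ _ => α < β
  | .o α _, .eq β _ _ => α < β
  | _, _ => False

/-- Side condition of the rule (□L self) of NSMB+:
`(d = "=" and α = 1)` or `(d = o and α ≠ 1)`. -/
def PC2 {Pm : MBParams} : PBox Pm → Prop
  | .e α _ _ => α = 1
  | .o α _ => α ≠ 1

/-- Provability in the nested-sequent calculus **NSMB+**; the boolean records
whether (cut) may be used. -/
inductive PProvable {Pm : MBParams} : Bool → PNSeq Pm → Prop
  /-- axiom `‖A, Γ ⇒ Δ, A, T‖` -/
  | axId {cut : Bool} {t : PNSeq Pm} {p Γ Δ ts A} :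
      PSubAt t p (.node Γ Δ ts) → A ∈ Γ → A ∈ Δ → PProvable cut t
  /-- axiom `‖Γ ⇒ Δ, ⊤, T‖` -/
  | axTop {cut : Bool} {t : PNSeq Pm} {p Γ Δ ts} :
      PSubAt t p (.node Γ Δ ts) → MBPForm.top ∈ Δ → PProvable cut t
  /-- axiom `‖⊥, Γ ⇒ Δ, T‖` -/
  | axBot {cut : Bool} {t : PNSeq Pm} {p Γ Δ ts} :
      PSubAt t p (.node Γ Δ ts) → MBPForm.bot ∈ Γ → PProvable cut t
  /-- axiom `‖Γ ⇒ Δ, □^o_1 A, T‖` -/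
  | axBoxO1 {cut : Bool} {t : PNSeq Pm} {p Γ Δ ts A} :
      PSubAt t p (.node Γ Δ ts) → MBPForm.boxo 1 Pm.one_mem A ∈ Δ → PProvable cut t
  /-- rule (cut) -/
  | cutR {t : PNSeq Pm} {p Γ Δ ts A} :
      PSubAt t p (.node Γ Δ ts) →
      PProvable true (t.setSeq p Γ (insert A Δ)) →
      PProvable true (t.setSeq p (insert A Γ) Δ) →
      PProvable true t
  /-- rule (wL) -/
  | wL {cut : Bool} {t : PNSeq Pm} {p Γ Δ ts A} :
      PSubAt t p (.node Γ Δ ts) → PProvable cut t →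
      PProvable cut (t.setSeq p (insert A Γ) Δ)
  /-- rule (wR) -/
  | wR {cut : Bool} {t : PNSeq Pm} {p Γ Δ ts A} :
      PSubAt t p (.node Γ Δ ts) → PProvable cut t →
      PProvable cut (t.setSeq p Γ (insert A Δ))
  /-- rule (¬L) -/
  | negL {cut : Bool} {t : PNSeq Pm} {p Γ Δ ts A} :
      PSubAt t p (.node Γ Δ ts) →
      PProvable cut (t.setSeq p Γ (insert A Δ)) →
      PProvable cut (t.setSeq p (insert (MBPForm.neg A) Γ) Δ)
  /-- rule (¬R) -/
  | negR {cut : Bool} {t : PNSeq Pm} {p Γ Δ ts A} :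
      PSubAt t p (.node Γ Δ ts) →
      PProvable cut (t.setSeq p (insert A Γ) Δ) →
      PProvable cut (t.setSeq p Γ (insert (MBPForm.neg A) Δ))
  /-- rule (∧L) -/
  | andL {cut : Bool} {t : PNSeq Pm} {p Γ Δ ts A B} :
      PSubAt t p (.node Γ Δ ts) →
      PProvable cut (t.setSeq p (insert A (insert B Γ)) Δ) →
      PProvable cut (t.setSeq p (insert (MBPForm.conj A B) Γ) Δ)
  /-- rule (∧R) -/
  | andR {cut : Bool} {t : PNSeq Pm} {p Γ Δ ts A B} :
      PSubAt t p (.node Γ Δ ts) →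
      PProvable cut (t.setSeq p Γ (insert A Δ)) →
      PProvable cut (t.setSeq p Γ (insert B Δ)) →
      PProvable cut (t.setSeq p Γ (insert (MBPForm.conj A B) Δ))
  /-- rule (□L) of NSMB+ -/
  | boxL {cut : Bool} {t : PNSeq Pm} {p Γ Δ ts i l u Γ' Δ' ts' A} {b : PBox Pm} :
      PSubAt t p (.node Γ Δ ts) → PNSeqs.get ts i = some (l, u) →
      PSubAt t (p ++ [i]) (.node Γ' Δ' ts') →
      PC1 b l →
      PProvable cut (t.setSeq (p ++ [i]) (insert A Γ') Δ') →
      PProvable cut (t.setSeq p (insert (b.box A) Γ) Δ)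
  /-- rule (□L sym) of NSMB+ -/
  | boxLsym {cut : Bool} {t : PNSeq Pm} {p Γ Δ ts i l u Γ' Δ' ts' A} {b : PBox Pm} :
      PSubAt t p (.node Γ Δ ts) → PNSeqs.get ts i = some (l, u) →
      PSubAt t (p ++ [i]) (.node Γ' Δ' ts') →
      PC1 b l →
      PProvable cut (t.setSeq p (insert A Γ) Δ) →
      PProvable cut (t.setSeq (p ++ [i]) (insert (b.box A) Γ') Δ')
  /-- rule (□L self) of NSMB+ -/
  | boxLself {cut : Bool} {t : PNSeq Pm} {p Γ Δ ts A} {b : PBox Pm} :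
      PSubAt t p (.node Γ Δ ts) → PC2 b →
      PProvable cut (t.setSeq p (insert A Γ) Δ) →
      PProvable cut (t.setSeq p (insert (b.box A) Γ) Δ)
  /-- rule (□^c_0) -/
  | boxC0 {cut : Bool} {t : PNSeq Pm} {p Γ Δ ts q Γ'' Δ'' ts'' A} :
      PSubAt t p (.node Γ Δ ts) → PSubAt t q (.node Γ'' Δ'' ts'') →
      PProvable cut (t.setSeq p (insert A Γ) Δ) →
      PProvable cut (t.setSeq q (insert (MBPForm.boxc0 A) Γ'') Δ'')
  /-- rule (□R) -/
  | boxR {cut : Bool} {t : PNSeq Pm} {p Γ Δ ts A} {l : PLab Pm} :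
      PSubAt t p (.node Γ Δ ts) →
      PProvable cut (t.addChild p l (.node ∅ {A} .nil)) →
      PProvable cut (t.setSeq p Γ (insert (l.box A) Δ))
  /-- rule (= R self) -/
  | eqRself {cut : Bool} {t : PNSeq Pm} {p Γ Δ ts A} :
      PSubAt t p (.node Γ Δ ts) →
      PProvable cut (t.setSeq p Γ (insert A Δ)) →
      PProvable cut (t.setSeq p Γ (insert (MBPForm.boxe 1 Pm.one_mem one_pos A) Δ))

/-!
Soundness is proved by induction on derivations, rule by rule. A countermodel of a rule's
conclusion (an embedding `E` into a realization under which every node is false) is turned into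
a countermodel of one of its premises. For rules that only rewrite the sequent at one node,
the same `E` works as soon as the premise's new sequent is false at its node; this follows from
the semantics of the principal formula and the side condition: the label's constraint on `R`
implies the box's accessibility condition, (□L sym) uses the symmetry of `R`, and
(□L self), (=R self) and the axiom for `□^o_1` use `R(s,t) = 1 ↔ s = t` and `R ≤ 1`.
For (□R), the world refuting the boxed formula becomes the image of the new child.
-/

section

variable {Pm : MBParams}

namespace PNSeqs

def len : PNSeqs Pm → ℕ
  | .nil => 0
  | .cons _ _ ts => ts.len + 1

theorem get_len : ∀ ts : PNSeqs Pm, ts.get ts.len = none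
  | .nil => rfl
  | .cons _ _ ts => get_len ts

theorem get_snoc (l : PLab Pm) (u : PNSeq Pm) :
    ∀ (ts : PNSeqs Pm) (j : ℕ),
      (ts.snoc l u).get j = if j = ts.len then some (l, u) else ts.get j
  | .nil, 0 | .nil, _ + 1 | .cons _ _ _, 0 => by simp [snoc, get, len]
  | .cons _ _ ts, j + 1 => by simp [snoc, get, len, get_snoc l u ts j]

theorem get_setSeqs (p : List ℕ) (X Y : Finset (MBPForm Pm)) :
    ∀ (ts : PNSeqs Pm) (i j : ℕ), (ts.setSeqs i p X Y).get j =
      if j = i then (ts.get j).map (Prod.map id (·.setSeq p X Y)) else ts.get j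
  | .nil, _, _ | .cons _ _ _, 0, 0 | .cons _ _ _, 0, _ + 1 | .cons _ _ _, _ + 1, 0 => by
    simp [setSeqs, get]
  | .cons _ _ ts, i + 1, j + 1 => by simp [setSeqs, get, get_setSeqs p X Y ts i j]

theorem get_addChilds (p : List ℕ) (l : PLab Pm) (u : PNSeq Pm) :
    ∀ (ts : PNSeqs Pm) (i j : ℕ), (ts.addChilds i p l u).get j =
      if j = i then (ts.get j).map (Prod.map id (·.addChild p l u)) else ts.get j
  | .nil, _, _ | .cons _ _ _, 0, 0 | .cons _ _ _, 0, _ + 1 | .cons _ _ _, _ + 1, 0 => by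
    simp [addChilds, get]
  | .cons _ _ ts, i + 1, j + 1 => by simp [addChilds, get, get_addChilds p l u ts i j]

end PNSeqs

theorem psubAt_nil_iff {t v : PNSeq Pm} : PSubAt t [] v ↔ v = t :=
  ⟨fun h => by cases h; rfl, fun h => h ▸ .here t⟩

theorem psubAt_cons_iff {Γ Δ : Finset (MBPForm Pm)} {ts : PNSeqs Pm} {i : ℕ} {p : List ℕ}
    {v : PNSeq Pm} :
    PSubAt (.node Γ Δ ts) (i :: p) v ↔ ∃ l u, ts.get i = some (l, u) ∧ PSubAt u p v :=
  ⟨fun h => by cases h; exact ⟨_, _, ‹_›, ‹_›⟩,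
    fun ⟨_, _, hi, h⟩ => .there hi h⟩

namespace PNSeq

def seqAt : PNSeq Pm → List ℕ → Option (Finset (MBPForm Pm) × Finset (MBPForm Pm))
  | .node Γ Δ _, [] => some (Γ, Δ)
  | .node _ _ ts, i :: q => (ts.get i).bind fun x => x.2.seqAt q

/-- The label of the bracket around the `i`-th child of the node at address `q`. -/
def labAt : PNSeq Pm → List ℕ → ℕ → Option (PLab Pm)
  | .node _ _ ts, [], i => (ts.get i).map Prod.fst
  | .node _ _ ts, j :: q, i => (ts.get j).bind fun x => x.2.labAt q i

theorem seqAt_eq_some_iff {t : PNSeq Pm} {q : List ℕ} {Γ Δ : Finset (MBPForm Pm)} :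
    t.seqAt q = some (Γ, Δ) ↔ ∃ ts, PSubAt t q (.node Γ Δ ts) := by
  induction q generalizing t with
  | nil => obtain ⟨Γ₀, Δ₀, ts⟩ := t; simp [seqAt, psubAt_nil_iff, eq_comm]
  | cons i q ih =>
    obtain ⟨Γ₀, Δ₀, ts⟩ := t
    simp only [seqAt, Option.bind_eq_some_iff, ih, psubAt_cons_iff]
    aesop

theorem labAt_eq_some_iff {t : PNSeq Pm} {q : List ℕ} {i : ℕ} {l : PLab Pm} :
    t.labAt q i = some l ↔
      ∃ Γ Δ ts u, PSubAt t q (.node Γ Δ ts) ∧ ts.get i = some (l, u) := by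
  induction q generalizing t with
  | nil => obtain ⟨Γ₀, Δ₀, ts⟩ := t; simp [labAt, psubAt_nil_iff]
  | cons j q ih =>
    obtain ⟨Γ₀, Δ₀, ts⟩ := t
    simp only [labAt, Option.bind_eq_some_iff, ih, psubAt_cons_iff]
    aesop

variable {t : PNSeq Pm} {p : List ℕ} {Γ Δ : Finset (MBPForm Pm)} {ts : PNSeqs Pm}

theorem seqAt_setSeq (t : PNSeq Pm) (p : List ℕ) (X Y : Finset (MBPForm Pm)) (q : List ℕ) :
    (t.setSeq p X Y).seqAt q = if q = p then (t.seqAt p).map fun _ => (X, Y) else t.seqAt q := by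
  induction p generalizing t q with
  | nil => obtain ⟨Γ₀, Δ₀, ts⟩ := t; cases q <;> simp [setSeq, seqAt]
  | cons i p ih =>
    obtain ⟨Γ₀, Δ₀, ts⟩ := t
    cases q with
    | nil => simp [setSeq, seqAt]
    | cons j r =>
      simp only [setSeq, seqAt, PNSeqs.get_setSeqs, List.cons.injEq]
      by_cases hj : j = i
      · subst hj; cases ts.get j <;> simp [ih]
      · simp [hj]

theorem labAt_setSeq (t : PNSeq Pm) (p : List ℕ) (X Y : Finset (MBPForm Pm)) :
    (t.setSeq p X Y).labAt = t.labAt := by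
  funext q i
  induction p generalizing t q with
  | nil => obtain ⟨Γ₀, Δ₀, ts⟩ := t; cases q <;> rfl
  | cons j p ih =>
    obtain ⟨Γ₀, Δ₀, ts⟩ := t
    cases q with
    | nil => simp only [setSeq, labAt, PNSeqs.get_setSeqs]; split_ifs <;> cases ts.get i <;> rfl
    | cons k r =>
      simp only [setSeq, labAt, PNSeqs.get_setSeqs]
      split_ifs with hk
      · subst hk; cases ts.get k <;> simp [ih]
      · rfl

theorem seqAt_addChild (hp : PSubAt t p (.node Γ Δ ts)) (l : PLab Pm)
    (Γu Δu : Finset (MBPForm Pm)) (q : List ℕ) :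
    (t.addChild p l (.node Γu Δu .nil)).seqAt q =
      if q = p ++ [ts.len] then some (Γu, Δu) else t.seqAt q := by
  induction p generalizing t q with
  | nil =>
    obtain rfl := psubAt_nil_iff.1 hp
    rcases q with _ | ⟨j, r⟩
    · simp [addChild, seqAt]
    · simp only [addChild, seqAt, PNSeqs.get_snoc, List.nil_append, List.cons.injEq]
      by_cases hj : j = ts.len
      · subst hj; cases r <;> simp [seqAt, PNSeqs.get, PNSeqs.get_len]
      · simp [hj]
  | cons i p ih =>
    obtain ⟨Γ₀, Δ₀, ts₀⟩ := t
    obtain ⟨l₀, u₀, hi, hu⟩ := psubAt_cons_iff.1 hp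
    cases q with
    | nil => simp [addChild, seqAt]
    | cons j r =>
      simp only [addChild, seqAt, PNSeqs.get_addChilds, List.cons_append, List.cons.injEq]
      by_cases hj : j = i
      · subst hj; simp [hi, ih hu]
      · simp [hj]

theorem labAt_addChild (hp : PSubAt t p (.node Γ Δ ts)) (l : PLab Pm)
    (Γu Δu : Finset (MBPForm Pm)) (q : List ℕ) (i : ℕ) :
    (t.addChild p l (.node Γu Δu .nil)).labAt q i =
      if q = p ∧ i = ts.len then some l else t.labAt q i := by
  induction p generalizing t q with
  | nil =>
    obtain rfl := psubAt_nil_iff.1 hp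
    rcases q with _ | ⟨j, r⟩
    · simp only [addChild, labAt, PNSeqs.get_snoc, true_and]
      split_ifs <;> rfl
    · simp only [addChild, labAt, PNSeqs.get_snoc, reduceCtorEq, false_and, if_false]
      split_ifs with hj
      · subst hj; rw [PNSeqs.get_len]; cases r <;> rfl
      · rfl
  | cons j p ih =>
    obtain ⟨Γ₀, Δ₀, ts₀⟩ := t
    obtain ⟨l₀, u₀, hi, hu⟩ := psubAt_cons_iff.1 hp
    cases q with
    | nil =>
      simp only [addChild, labAt, PNSeqs.get_addChilds, reduceCtorEq, false_and, if_false]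
      split_ifs <;> cases ts₀.get i <;> rfl
    | cons k r =>
      simp only [addChild, labAt, PNSeqs.get_addChilds, List.cons.injEq]
      by_cases hk : k = j
      · subst hk; simp [hi, ih hu]
      · simp [hk]

theorem labAt_append {v : PNSeq Pm} (hp : PSubAt t p v) (q : List ℕ) (i : ℕ) :
    t.labAt (p ++ q) i = v.labAt q i := by
  induction hp with
  | here => rfl
  | there hi _ ih => simp [labAt, hi, ih]

theorem labAt_append_len (hp : PSubAt t p (.node Γ Δ ts)) (i : ℕ) :
    t.labAt (p ++ [ts.len]) i = none := by
  simp [labAt_append hp, labAt, PNSeqs.get_len]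

end PNSeq

def SeqFalse (M : MBPRealization Pm) (Γ Δ : Finset (MBPForm Pm)) (s : M.F.S) : Prop :=
  (∀ A ∈ Γ, s ∈ M.val A) ∧ (∀ A ∈ Δ, s ∉ M.val A)

def PBoxCond : PBox Pm → ℝ → Prop
  | .e α _ _, r => r = α
  | .o α _, r => α < r

section Semantics

variable {M : MBPRealization Pm} {Γ Δ X Y : Finset (MBPForm Pm)} {A B : MBPForm Pm} {s : M.F.S}

theorem seqFalse_insert_left :
    SeqFalse M (insert A Γ) Δ s ↔ s ∈ M.val A ∧ SeqFalse M Γ Δ s := by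
  simp [SeqFalse, and_assoc]

theorem seqFalse_insert_right :
    SeqFalse M Γ (insert A Δ) s ↔ s ∉ M.val A ∧ SeqFalse M Γ Δ s := by
  simp only [SeqFalse, Finset.forall_mem_insert]
  tauto

theorem SeqFalse.mono (h : SeqFalse M X Y s) (hΓ : Γ ⊆ X) (hΔ : Δ ⊆ Y) :
    SeqFalse M Γ Δ s :=
  ⟨fun A hA => h.1 A (hΓ hA), fun A hA => h.2 A (hΔ hA)⟩

theorem mem_val_neg : s ∈ M.val (.neg A) ↔ s ∉ M.val A := Iff.rfl

theorem mem_val_conj : s ∈ M.val (.conj A B) ↔ s ∈ M.val A ∧ s ∈ M.val B := Iff.rfl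

theorem mem_val_boxc0 : s ∈ M.val (.boxc0 A) ↔ ∀ u, u ∈ M.val A := Iff.rfl

theorem mem_val_pBox_box {b : PBox Pm} :
    s ∈ M.val (b.box A) ↔ ∀ u, PBoxCond b (M.F.R s u) → u ∈ M.val A := by
  cases b <;> rfl

theorem mem_val_pLab_box {l : PLab Pm} :
    s ∈ M.val (l.box A) ↔ ∀ u, PLabCond l (M.F.R s u) → u ∈ M.val A := by
  cases l <;> simp [PLab.box, PLabCond, MBPRealization.val, MBPForm.valR]

theorem EQLFrame.R_self (F : EQLFrame) (s : F.S) : F.R s s = 1 := (F.eq_one_iff s s).2 rfl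

theorem mem_val_boxo_one : s ∈ M.val (.boxo 1 Pm.one_mem A) :=
  fun u hu => absurd (M.F.mem_Icc s u).2 (not_le.2 hu)

theorem mem_val_boxe_one : s ∈ M.val (.boxe 1 Pm.one_mem one_pos A) ↔ s ∈ M.val A :=
  ⟨fun h => h s (M.F.R_self s), fun h u hu => (M.F.eq_one_iff s u).1 hu ▸ h⟩

theorem PC1.pBoxCond {b : PBox Pm} {l : PLab Pm} {r : ℝ} (hc : PC1 b l) (hr : PLabCond l r) :
    PBoxCond b r := by
  cases b <;> cases l <;> simp only [PC1, PLabCond, PBoxCond] at hc hr ⊢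
  all_goals first | exact hc.elim | linarith

theorem PC2.pBoxCond_one {b : PBox Pm} (hc : PC2 b) : PBoxCond b 1 := by
  cases b with
  | e α _ _ => exact hc.symm
  | o α hα => exact lt_of_le_of_ne (Pm.subI hα).2 hc

end Semantics

section Countermodels

variable {M : MBPRealization Pm} {t : PNSeq Pm} {E : List ℕ → M.F.S} {p : List ℕ}
  {Γ Δ X Y : Finset (MBPForm Pm)} {ts : PNSeqs Pm}

theorem isEmb_iff_labAt : PIsEmb M t E ↔
    ∀ q i l, t.labAt q i = some l → PLabCond l (M.F.R (E q) (E (q ++ [i]))) := by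
  simp only [PNSeq.labAt_eq_some_iff]
  exact ⟨fun h q i l ⟨Γ, Δ, ts, u, hs, hi⟩ => h q Γ Δ ts i l u hs hi,
    fun h q Γ Δ ts i l u hs hi => h q i l ⟨Γ, Δ, ts, u, hs, hi⟩⟩

theorem falseUnder_iff_seqAt : PFalseUnder M t E ↔
    ∀ q Γ Δ, t.seqAt q = some (Γ, Δ) → SeqFalse M Γ Δ (E q) := by
  simp only [PNSeq.seqAt_eq_some_iff]
  exact ⟨fun h q Γ Δ ⟨ts, hs⟩ => h q Γ Δ ts hs,
    fun h q Γ Δ ts hs => h q Γ Δ ⟨ts, hs⟩⟩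

theorem isEmb_setSeq_iff : PIsEmb M (t.setSeq p X Y) E ↔ PIsEmb M t E := by
  simp only [isEmb_iff_labAt, PNSeq.labAt_setSeq]

theorem PFalseUnder.setSeq (hF : PFalseUnder M t E) (h : SeqFalse M X Y (E p)) :
    PFalseUnder M (t.setSeq p X Y) E := by
  rw [falseUnder_iff_seqAt] at hF ⊢
  intro q Γ Δ hq
  rw [PNSeq.seqAt_setSeq] at hq
  split_ifs at hq with hqp
  · obtain ⟨_, -, ⟨⟩⟩ := Option.map_eq_some_iff.1 hq
    exact hqp ▸ h
  · exact hF q Γ Δ hq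

theorem PFalseUnder.seqFalse_setSeq (hF : PFalseUnder M (t.setSeq p X Y) E)
    (hp : PSubAt t p (.node Γ Δ ts)) : SeqFalse M X Y (E p) :=
  falseUnder_iff_seqAt.1 hF p X Y
    (by simp [PNSeq.seqAt_setSeq, PNSeq.seqAt_eq_some_iff.2 ⟨_, hp⟩])

theorem PFalseUnder.of_setSeq (hF : PFalseUnder M (t.setSeq p X Y) E)
    (hp : PSubAt t p (.node Γ Δ ts)) (hΓ : Γ ⊆ X) (hΔ : Δ ⊆ Y) : PFalseUnder M t E := by
  have hpF := (hF.seqFalse_setSeq hp).mono hΓ hΔ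
  rw [falseUnder_iff_seqAt] at hF ⊢
  intro q Γ' Δ' hq
  by_cases hqp : q = p
  · subst hqp
    rw [PNSeq.seqAt_eq_some_iff.2 ⟨_, hp⟩] at hq
    cases hq
    exact hpF
  · exact hF q Γ' Δ' (by rw [PNSeq.seqAt_setSeq, if_neg hqp, hq])

theorem PIsEmb.addChild (hE : PIsEmb M t E) (hp : PSubAt t p (.node Γ Δ ts)) {l : PLab Pm}
    {w : M.F.S} (hw : PLabCond l (M.F.R (E p) w)) (Γu Δu : Finset (MBPForm Pm)) :
    PIsEmb M (t.addChild p l (.node Γu Δu .nil)) (Function.update E (p ++ [ts.len]) w) := by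
  rw [isEmb_iff_labAt] at hE ⊢
  intro q i l' hl
  rw [PNSeq.labAt_addChild hp] at hl
  split_ifs at hl with hqi
  · obtain ⟨rfl, rfl⟩ := hqi
    cases hl
    simpa using hw
  · have hq : q ≠ p ++ [ts.len] := by
      rintro rfl
      simp [PNSeq.labAt_append_len hp] at hl
    have hqi' : q ++ [i] ≠ p ++ [ts.len] := fun h => hqi (by simpa using h)
    rw [Function.update_of_ne hq, Function.update_of_ne hqi']
    exact hE q i l' hl

theorem PFalseUnder.addChild (hF : PFalseUnder M t E) (hp : PSubAt t p (.node Γ Δ ts))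
    (l : PLab Pm) {Γu Δu : Finset (MBPForm Pm)} {w : M.F.S} (hw : SeqFalse M Γu Δu w) :
    PFalseUnder M (t.addChild p l (.node Γu Δu .nil)) (Function.update E (p ++ [ts.len]) w) := by
  rw [falseUnder_iff_seqAt] at hF ⊢
  intro q Γ' Δ' hq
  rw [PNSeq.seqAt_addChild hp] at hq
  split_ifs at hq with hqn
  · cases hq
    simpa [hqn] using hw
  · rw [Function.update_of_ne hqn]
    exact hF q Γ' Δ' hq

end Countermodels

namespace PNSValid

variable {t : PNSeq Pm} {p : List ℕ} {Γ Δ X Y : Finset (MBPForm Pm)} {ts : PNSeqs Pm}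
  {A B : MBPForm Pm}

theorem of_node (hp : PSubAt t p (.node Γ Δ ts))
    (h : ∀ (M : MBPRealization Pm) (s : M.F.S), ¬ SeqFalse M Γ Δ s) : PNSValid t :=
  fun M E _ hF => h M (E p) (hF p Γ Δ ts hp)

theorem not_seqFalse_setSeq {p' : List ℕ} {X' Y' : Finset (MBPForm Pm)}
    (hv : PNSValid (t.setSeq p' X' Y')) (hp : PSubAt t p (.node Γ Δ ts)) (hΓ : Γ ⊆ X)
    (hΔ : Δ ⊆ Y) {M : MBPRealization Pm} {E : List ℕ → M.F.S}
    (hE : PIsEmb M (t.setSeq p X Y) E) (hF : PFalseUnder M (t.setSeq p X Y) E) :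
    ¬ SeqFalse M X' Y' (E p') := fun h =>
  hv M E (isEmb_setSeq_iff.2 (isEmb_setSeq_iff.1 hE)) ((hF.of_setSeq hp hΓ hΔ).setSeq h)

theorem weaken (hv : PNSValid t) (hp : PSubAt t p (.node Γ Δ ts)) (hΓ : Γ ⊆ X)
    (hΔ : Δ ⊆ Y) :
    PNSValid (t.setSeq p X Y) :=
  fun M E hE hF => hv M E (isEmb_setSeq_iff.1 hE) (hF.of_setSeq hp hΓ hΔ)

theorem cut (hp : PSubAt t p (.node Γ Δ ts)) (h₁ : PNSValid (t.setSeq p Γ (insert A Δ)))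
    (h₂ : PNSValid (t.setSeq p (insert A Γ) Δ)) : PNSValid t := by
  intro M E hE hF
  have hs : SeqFalse M Γ Δ (E p) := hF p Γ Δ ts hp
  by_cases hA : E p ∈ M.val A
  · exact h₂ M E (isEmb_setSeq_iff.2 hE) (hF.setSeq (seqFalse_insert_left.2 ⟨hA, hs⟩))
  · exact h₁ M E (isEmb_setSeq_iff.2 hE) (hF.setSeq (seqFalse_insert_right.2 ⟨hA, hs⟩))

theorem negL (hp : PSubAt t p (.node Γ Δ ts)) (hv : PNSValid (t.setSeq p Γ (insert A Δ))) :
    PNSValid (t.setSeq p (insert (.neg A) Γ) Δ) := by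
  intro M E hE hF
  obtain ⟨hA, hs⟩ := seqFalse_insert_left.1 (hF.seqFalse_setSeq hp)
  exact hv.not_seqFalse_setSeq hp (Finset.subset_insert _ _) subset_rfl hE hF
    (seqFalse_insert_right.2 ⟨mem_val_neg.1 hA, hs⟩)

theorem negR (hp : PSubAt t p (.node Γ Δ ts)) (hv : PNSValid (t.setSeq p (insert A Γ) Δ)) :
    PNSValid (t.setSeq p Γ (insert (.neg A) Δ)) := by
  intro M E hE hF
  obtain ⟨hA, hs⟩ := seqFalse_insert_right.1 (hF.seqFalse_setSeq hp)
  exact hv.not_seqFalse_setSeq hp subset_rfl (Finset.subset_insert _ _) hE hF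
    (seqFalse_insert_left.2 ⟨not_not.1 (mt mem_val_neg.2 hA), hs⟩)

theorem andL (hp : PSubAt t p (.node Γ Δ ts))
    (hv : PNSValid (t.setSeq p (insert A (insert B Γ)) Δ)) :
    PNSValid (t.setSeq p (insert (.conj A B) Γ) Δ) := by
  intro M E hE hF
  obtain ⟨hAB, hs⟩ := seqFalse_insert_left.1 (hF.seqFalse_setSeq hp)
  obtain ⟨hA, hB⟩ := mem_val_conj.1 hAB
  exact hv.not_seqFalse_setSeq hp (Finset.subset_insert _ _) subset_rfl hE hF
    (seqFalse_insert_left.2 ⟨hA, seqFalse_insert_left.2 ⟨hB, hs⟩⟩)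

theorem andR (hp : PSubAt t p (.node Γ Δ ts)) (h₁ : PNSValid (t.setSeq p Γ (insert A Δ)))
    (h₂ : PNSValid (t.setSeq p Γ (insert B Δ))) :
    PNSValid (t.setSeq p Γ (insert (.conj A B) Δ)) := by
  intro M E hE hF
  obtain ⟨hAB, hs⟩ := seqFalse_insert_right.1 (hF.seqFalse_setSeq hp)
  by_cases hA : E p ∈ M.val A
  · exact h₂.not_seqFalse_setSeq hp subset_rfl (Finset.subset_insert _ _) hE hF
      (seqFalse_insert_right.2 ⟨fun hB => hAB (mem_val_conj.2 ⟨hA, hB⟩), hs⟩)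
  · exact h₁.not_seqFalse_setSeq hp subset_rfl (Finset.subset_insert _ _) hE hF
      (seqFalse_insert_right.2 ⟨hA, hs⟩)

theorem boxL {i : ℕ} {l : PLab Pm} {u : PNSeq Pm} {Γ' Δ' : Finset (MBPForm Pm)}
    {ts' : PNSeqs Pm} {b : PBox Pm} (hp : PSubAt t p (.node Γ Δ ts))
    (hi : ts.get i = some (l, u)) (hp' : PSubAt t (p ++ [i]) (.node Γ' Δ' ts')) (hc : PC1 b l)
    (hv : PNSValid (t.setSeq (p ++ [i]) (insert A Γ') Δ')) :
    PNSValid (t.setSeq p (insert (b.box A) Γ) Δ) := by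
  intro M E hE hF
  have hbox := (seqFalse_insert_left.1 (hF.seqFalse_setSeq hp)).1
  have hR := isEmb_setSeq_iff.1 hE p Γ Δ ts i l u hp hi
  have hs : SeqFalse M Γ' Δ' _ :=
    (hF.of_setSeq hp (Finset.subset_insert _ _) subset_rfl) _ _ _ _ hp'
  exact hv.not_seqFalse_setSeq hp (Finset.subset_insert _ _) subset_rfl hE hF
    (seqFalse_insert_left.2 ⟨mem_val_pBox_box.1 hbox _ (hc.pBoxCond hR), hs⟩)

theorem boxLsym {i : ℕ} {l : PLab Pm} {u : PNSeq Pm} {Γ' Δ' : Finset (MBPForm Pm)}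
    {ts' : PNSeqs Pm} {b : PBox Pm} (hp : PSubAt t p (.node Γ Δ ts))
    (hi : ts.get i = some (l, u)) (hp' : PSubAt t (p ++ [i]) (.node Γ' Δ' ts')) (hc : PC1 b l)
    (hv : PNSValid (t.setSeq p (insert A Γ) Δ)) :
    PNSValid (t.setSeq (p ++ [i]) (insert (b.box A) Γ') Δ') := by
  intro M E hE hF
  have hbox := (seqFalse_insert_left.1 (hF.seqFalse_setSeq hp')).1
  have hR := isEmb_setSeq_iff.1 hE p Γ Δ ts i l u hp hi
  rw [M.F.symm] at hR
  have hs : SeqFalse M Γ Δ _ :=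
    (hF.of_setSeq hp' (Finset.subset_insert _ _) subset_rfl) _ _ _ _ hp
  exact hv.not_seqFalse_setSeq hp' (Finset.subset_insert _ _) subset_rfl hE hF
    (seqFalse_insert_left.2 ⟨mem_val_pBox_box.1 hbox _ (hc.pBoxCond hR), hs⟩)

theorem boxLself {b : PBox Pm} (hp : PSubAt t p (.node Γ Δ ts)) (hc : PC2 b)
    (hv : PNSValid (t.setSeq p (insert A Γ) Δ)) :
    PNSValid (t.setSeq p (insert (b.box A) Γ) Δ) := by
  intro M E hE hF
  obtain ⟨hbox, hs⟩ := seqFalse_insert_left.1 (hF.seqFalse_setSeq hp)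
  have hA := mem_val_pBox_box.1 hbox (E p) (by rw [M.F.R_self]; exact hc.pBoxCond_one)
  exact hv.not_seqFalse_setSeq hp (Finset.subset_insert _ _) subset_rfl hE hF
    (seqFalse_insert_left.2 ⟨hA, hs⟩)

theorem boxC0 {q : List ℕ} {Γ'' Δ'' : Finset (MBPForm Pm)} {ts'' : PNSeqs Pm}
    (hp : PSubAt t p (.node Γ Δ ts)) (hq : PSubAt t q (.node Γ'' Δ'' ts''))
    (hv : PNSValid (t.setSeq p (insert A Γ) Δ)) :
    PNSValid (t.setSeq q (insert (.boxc0 A) Γ'') Δ'') := by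
  intro M E hE hF
  have hbox := (seqFalse_insert_left.1 (hF.seqFalse_setSeq hq)).1
  have hs : SeqFalse M Γ Δ _ :=
    (hF.of_setSeq hq (Finset.subset_insert _ _) subset_rfl) _ _ _ _ hp
  exact hv.not_seqFalse_setSeq hq (Finset.subset_insert _ _) subset_rfl hE hF
    (seqFalse_insert_left.2 ⟨mem_val_boxc0.1 hbox (E p), hs⟩)

theorem eqRself (hp : PSubAt t p (.node Γ Δ ts)) (hv : PNSValid (t.setSeq p Γ (insert A Δ))) :
    PNSValid (t.setSeq p Γ (insert (.boxe 1 Pm.one_mem one_pos A) Δ)) := by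
  intro M E hE hF
  obtain ⟨hbox, hs⟩ := seqFalse_insert_right.1 (hF.seqFalse_setSeq hp)
  exact hv.not_seqFalse_setSeq hp subset_rfl (Finset.subset_insert _ _) hE hF
    (seqFalse_insert_right.2 ⟨mt mem_val_boxe_one.2 hbox, hs⟩)

theorem boxR {l : PLab Pm} (hp : PSubAt t p (.node Γ Δ ts))
    (hv : PNSValid (t.addChild p l (.node ∅ {A} .nil))) :
    PNSValid (t.setSeq p Γ (insert (l.box A) Δ)) := by
  intro M E hE hF
  have hbox := (seqFalse_insert_right.1 (hF.seqFalse_setSeq hp)).1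
  obtain ⟨w, hw, hwA⟩ : ∃ w, PLabCond l (M.F.R (E p) w) ∧ w ∉ M.val A := by
    simpa [mem_val_pLab_box] using hbox
  exact hv M _ ((isEmb_setSeq_iff.1 hE).addChild hp hw ∅ {A})
    ((hF.of_setSeq hp subset_rfl (Finset.subset_insert _ _)).addChild hp l
      (by simpa [SeqFalse] using hwA))

end PNSValid

theorem PProvable.valid {cut : Bool} {t : PNSeq Pm} (h : PProvable cut t) : PNSValid t := by
  induction h with
  | axId hp hΓ hΔ => exact .of_node hp fun _ _ h => h.2 _ hΔ (h.1 _ hΓ)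
  | axTop hp hΔ => exact .of_node hp fun _ _ h => h.2 _ hΔ trivial
  | axBot hp hΓ => exact .of_node hp fun _ _ h => h.1 _ hΓ
  | axBoxO1 hp hΔ => exact .of_node hp fun _ _ h => h.2 _ hΔ mem_val_boxo_one
  | cutR hp _ _ ih₁ ih₂ => exact .cut hp ih₁ ih₂
  | wL hp _ ih => exact ih.weaken hp (Finset.subset_insert _ _) subset_rfl
  | wR hp _ ih => exact ih.weaken hp subset_rfl (Finset.subset_insert _ _)
  | negL hp _ ih => exact .negL hp ih
  | negR hp _ ih => exact .negR hp ih
  | andL hp _ ih => exact .andL hp ih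
  | andR hp _ _ ih₁ ih₂ => exact .andR hp ih₁ ih₂
  | boxL hp hi hp' hc _ ih => exact .boxL hp hi hp' hc ih
  | boxLsym hp hi hp' hc _ ih => exact .boxLsym hp hi hp' hc ih
  | boxLself hp hc _ ih => exact .boxLself hp hc ih
  | boxC0 hp hq _ ih => exact .boxC0 hp hq ih
  | boxR hp _ ih => exact .boxR hp ih
  | eqRself hp _ ih => exact .eqRself hp ih

end

/-- Soundness of NSMB+: if a nested-sequent of MB+ is
provable in NSMB+, then it is valid. -/
theorem soundness_NSMBplus {Pm : MBParams} (t : PNSeq Pm)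
    (h : PProvable true t) : PNSValid t :=
  h.valid

end MBQL
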